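/- arXiv:cs/0509080 — 2 statements merged into one kernel-verified Lean document; each statement's English description precedes it below -/
import Mathlib

section
/- (Lemma 3: Cauchy–Binet formula for power series.) Let m ≥ 1, let w : ℕ → ℂ, and let a_1,…,a_m, b_1,…,b_m ∈ ℂ. Suppose there is r ≥ max_{i,j} |a_i b_j| such that Σ_{n≥0} |w(n)| r^n < ∞. Then Σ_{k_1 > k_2 > ⋯ > k_m ≥ 0} det[a_i^{k_j}] · det[b_i^{k_j}] · ∏_{i=1}^m w(k_i) = det[ W(a_i b_j) ]_{i,j=1}^m, where W(z) = Σ_{n≥0} w(n) z^n, the outer sum runs over all strictly decreasing m-tuples of nonnegative integers, and all series converge absolutely. -/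
/-!
Expanding every column of `det [W (a i * b j)]` into its power series (multilinearity, legitimate
by absolute convergence) writes the determinant as the sum over all exponent tuples `k` of
`det [a i ^ k j] * ∏ j, w (k j) * b j ^ k j`. Tuples with a repeated exponent contribute nothing,
and every other tuple is, uniquely, a strictly decreasing tuple composed with a permutation `σ`.
For a fixed decreasing tuple, the `sign σ` coming from `det [a i ^ k (σ j)]` turns the sum over
`σ` into `det [a i ^ k j] * det [b i ^ k j] * ∏ i, w (k i)`.
-/

open Matrix Equiv Function

section PiProduct

variable {R : Type*} [NormedCommRing R] [CompleteSpace R]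

theorem summable_norm_and_hasSum_pi_prod (ι : Type*) [hι : Fintype ι] (f : ι → ℕ → R)
    (hf : ∀ j, Summable fun n => ‖f j n‖) :
    (Summable fun k : ι → ℕ => ‖∏ j, f j (k j)‖) ∧
      HasSum (fun k : ι → ℕ => ∏ j, f j (k j)) (∏ j, ∑' n, f j n) := by
  revert f
  refine Fintype.induction_empty_option ?_ ?_ ?_ ι (h_fintype := hι)
  · intro α β _ e ih f hf
    let := Fintype.ofEquiv β e.symm
    obtain ⟨hnorm, hsum⟩ := ih (fun a => f (e a)) (fun a => hf (e a))
    let E : (α → ℕ) ≃ (β → ℕ) := e.arrowCongr (Equiv.refl ℕ)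
    have hE : ∀ k : α → ℕ, ∏ j, f j (E k j) = ∏ a, f (e a) (k a) := fun k => by
      rw [← e.prod_comp]; simp [E]
    rw [← e.prod_comp]
    refine ⟨?_, ?_⟩
    · rw [← E.summable_iff]; simpa only [comp_def, hE] using hnorm
    · rw [← E.hasSum_iff]; simpa only [comp_def, hE] using hsum
  · intro f _
    exact ⟨.of_finite, by simp⟩
  · intro α _ ih f hf
    obtain ⟨hnorm, hsum⟩ := ih (fun a => f (some a)) (fun a => hf (some a))
    let E : ℕ × (α → ℕ) ≃ (Option α → ℕ) := (piOptionEquivProd (β := fun _ => ℕ)).symm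
    have hE : ∀ p : ℕ × (α → ℕ), ∏ j, f j (E p j) = f none p.1 * ∏ a, f (some a) (p.2 a) :=
      fun p => by rw [Fintype.prod_option]; rfl
    rw [Fintype.prod_option]
    refine ⟨?_, ?_⟩
    · rw [← E.summable_iff]; simpa only [comp_def, hE] using (hf none).mul_norm hnorm
    · rw [← E.hasSum_iff]
      simp only [comp_def, hE]
      have := (summable_mul_of_summable_norm (hf none) hnorm).hasSum
      rwa [← tsum_mul_tsum_of_summable_norm (hf none) hnorm, hsum.tsum_eq] at this

theorem Matrix.hasSum_det_tsum {n : Type*} [Fintype n] [DecidableEq n]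
    (f : ℕ → Matrix n n R) (hf : ∀ i j, Summable fun N => ‖f N i j‖) :
    HasSum (fun k : n → ℕ => det (of fun i j => f (k j) i j))
      (det (of fun i j => ∑' N, f N i j)) := by
  simp only [det_apply', of_apply]
  exact hasSum_sum fun σ _ =>
    ((summable_norm_and_hasSum_pi_prod n (fun j N => f N (σ j) j) fun j => hf _ _).2).mul_left _

end PiProduct

theorem Matrix.sum_perm_det_mul_prod {R n ι : Type*} [CommRing R] [Fintype n] [DecidableEq n]
    (f g : n → ι → R) (k : n → ι) :
    ∑ σ : Perm n, det (of fun i j => f i (k (σ j))) * ∏ j, g j (k (σ j)) =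
      det (of fun i j => f i (k j)) * det (of fun i j => g i (k j)) := by
  have hperm : ∀ σ : Perm n, det (of fun i j => f i (k (σ j))) =
      Perm.sign σ * det (of fun i j => f i (k j)) := fun σ =>
    det_permute' σ (of fun i j => f i (k j))
  rw [← det_transpose (of fun i j => g i (k j)), det_apply' (of fun i j => g i (k j))ᵀ,
    Finset.mul_sum]
  refine Finset.sum_congr rfl fun σ _ => ?_
  simp only [hperm, transpose_apply, of_apply]
  ring

section StrictAntiPerm

variable {β : Type*} [LinearOrder β] {m : ℕ}

theorem injective_strictAnti_comp_perm :
    Injective fun p : {k : Fin m → β // StrictAnti k} × Perm (Fin m) => p.1.1 ∘ p.2 := by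
  rintro ⟨⟨k₀, h₀⟩, σ⟩ ⟨⟨k₁, h₁⟩, τ⟩ h
  simp only at h
  have hrange : Set.range k₀ = Set.range k₁ := by
    simpa only [Set.range_comp, EquivLike.range_eq_univ, Set.image_univ] using
      congrArg Set.range h
  obtain rfl : k₀ = k₁ := (h₀.range_inj h₁).mp hrange
  obtain rfl : σ = τ := Equiv.ext fun x => h₀.injective (congrFun h x)
  rfl

theorem exists_strictAnti_comp_perm_eq {k : Fin m → β} (hk : Injective k) :
    ∃ p : {k : Fin m → β // StrictAnti k} × Perm (Fin m), p.1.1 ∘ p.2 = k := by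
  have hsort : StrictMono (k ∘ Tuple.sort k) :=
    (Tuple.monotone_sort k).strictMono_of_injective (hk.comp (Tuple.sort k).injective)
  let τ : Perm (Fin m) := Fin.revPerm.trans (Tuple.sort k)
  have hτ : StrictAnti (k ∘ τ) := fun i j hij => hsort (Fin.rev_lt_rev.mpr hij)
  exact ⟨⟨⟨k ∘ τ, hτ⟩, τ⁻¹⟩, by ext; simp⟩

theorem HasSum.strictAnti_sum_perm {α : Type*} [AddCommMonoid α] [TopologicalSpace α]
    [ContinuousAdd α] [RegularSpace α] {F : (Fin m → β) → α} {s : α}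
    (hF : ∀ k, ¬ Injective k → F k = 0) (h : HasSum F s) :
    HasSum (fun k : {k : Fin m → β // StrictAnti k} => ∑ σ : Perm (Fin m), F (k.1 ∘ σ)) s := by
  have hvanish : ∀ k ∉ Set.range fun p : {k : Fin m → β // StrictAnti k} × Perm (Fin m) =>
      p.1.1 ∘ p.2, F k = 0 := fun k hk =>
    hF k fun hinj => hk (exists_strictAnti_comp_perm_eq hinj)
  exact ((injective_strictAnti_comp_perm.hasSum_iff hvanish).mpr h).prod_fiberwise
    fun _ => hasSum_fintype _

end StrictAntiPerm

theorem Matrix.det_of_pow_eq_zero_of_not_injective {R n : Type*} [CommRing R] [Fintype n]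
    [DecidableEq n] (a : n → R) {k : n → ℕ} (hk : ¬ Injective k) :
    det (of fun i j => a i ^ k j) = 0 := by
  obtain ⟨j₁, j₂, hk, hne⟩ := not_injective_iff.mp hk
  exact det_zero_of_column_eq hne fun i => by simp [hk]

theorem Matrix.hasSum_det_of_power_series {R n : Type*} [NormedCommRing R] [CompleteSpace R]
    [Fintype n] [DecidableEq n] (w : ℕ → R) (a b : n → R)
    (h : ∀ i j, Summable fun N => ‖w N * (a i * b j) ^ N‖) :
    HasSum (fun k : n → ℕ => det (of fun i j => a i ^ k j) * ∏ j, w (k j) * b j ^ k j)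
      (det (of fun i j => ∑' N, w N * (a i * b j) ^ N)) :=
  (hasSum_det_tsum (fun N => of fun i j => w N * (a i * b j) ^ N) h).congr_fun fun k => by
    rw [mul_comm, ← det_mul_row]
    congr 1
    ext i j
    simp only [of_apply, mul_pow]
    ring

theorem cauchy_binet_power_series_general (m : ℕ) (w : ℕ → ℂ)
    (a b : Fin m → ℂ) (r : ℝ)
    (hr : ∀ i j, ‖a i * b j‖ ≤ r)
    (hw : Summable fun n : ℕ => ‖w n‖ * r ^ n) :
    (∀ i j, Summable fun n : ℕ => w n * (a i * b j) ^ n) ∧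
    Summable (fun k : {k : Fin m → ℕ // StrictAnti k} =>
      Matrix.det (Matrix.of fun i j : Fin m => a i ^ k.1 j) *
        Matrix.det (Matrix.of fun i j : Fin m => b i ^ k.1 j) *
        ∏ i, w (k.1 i)) ∧
    (∑' k : {k : Fin m → ℕ // StrictAnti k},
        Matrix.det (Matrix.of fun i j : Fin m => a i ^ k.1 j) *
          Matrix.det (Matrix.of fun i j : Fin m => b i ^ k.1 j) *
          ∏ i, w (k.1 i))
      = Matrix.det (Matrix.of fun i j : Fin m => ∑' n : ℕ, w n * (a i * b j) ^ n) := by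
  have hnorm : ∀ i j, Summable fun n => ‖w n * (a i * b j) ^ n‖ := fun i j =>
    hw.of_nonneg_of_le (fun _ => norm_nonneg _) fun n => by
      rw [norm_mul, norm_pow]
      exact mul_le_mul_of_nonneg_left (pow_le_pow_left₀ (norm_nonneg _) (hr i j) n)
        (norm_nonneg _)
  have hsorted : HasSum (fun k : {k : Fin m → ℕ // StrictAnti k} =>
      det (of fun i j => a i ^ k.1 j) * det (of fun i j => b i ^ k.1 j) * ∏ i, w (k.1 i))
      (det (of fun i j => ∑' n, w n * (a i * b j) ^ n)) := by
    refine ((hasSum_det_of_power_series w a b hnorm).strictAnti_sum_perm fun k hk => by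
      rw [det_of_pow_eq_zero_of_not_injective a hk, zero_mul]).congr_fun fun k => ?_
    have hw_row : det (of fun i j => w (k.1 j) * b i ^ k.1 j) =
        (∏ j, w (k.1 j)) * det (of fun i j => b i ^ k.1 j) := det_mul_row _ _
    simp only [Function.comp_apply]
    rw [sum_perm_det_mul_prod (fun i n => a i ^ n) (fun j n => w n * b j ^ n), hw_row]
    ring
  exact ⟨fun i j => (hnorm i j).of_norm, hsorted.summable, hsorted.tsum_eq⟩

/-- Lemma 3: Cauchy–Binet formula for power series. -/
theorem cauchy_binet_power_series (m : ℕ) (hm : 1 ≤ m) (w : ℕ → ℂ)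
    (a b : Fin m → ℂ) (r : ℝ)
    (hr : ∀ i j, ‖a i * b j‖ ≤ r)
    (hw : Summable fun n : ℕ => ‖w n‖ * r ^ n) :
    (∀ i j, Summable fun n : ℕ => w n * (a i * b j) ^ n) ∧
    Summable (fun k : {k : Fin m → ℕ // StrictAnti k} =>
      Matrix.det (Matrix.of fun i j : Fin m => a i ^ k.1 j) *
        Matrix.det (Matrix.of fun i j : Fin m => b i ^ k.1 j) *
        ∏ i, w (k.1 i)) ∧
    (∑' k : {k : Fin m → ℕ // StrictAnti k},
        Matrix.det (Matrix.of fun i j : Fin m => a i ^ k.1 j) *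
          Matrix.det (Matrix.of fun i j : Fin m => b i ^ k.1 j) *
          ∏ i, w (k.1 i))
      = Matrix.det (Matrix.of fun i j : Fin m => ∑' n : ℕ, w n * (a i * b j) ^ n) :=
  cauchy_binet_power_series_general m w a b r hr hw
end

section
/- (Lemma 6: exponential bound on the double unitary integral.) Let M ≥ 1, let T and R be M×M Hermitian positive definite complex matrices with smallest eigenvalues of T^{-1} and R^{-1} equal to t_min and r_min respectively, and let D = diag(μ) with μ_i = √λ_i for λ_1,…,λ_M ≥ 0. Then 0 < ∫_{U(M)} ∫_{U(M)} exp( −Tr( T^{-1} U D V† R^{-1} V D† U† ) ) dU dV ≤ exp( −t_min · r_min · Σ_{i=1}^M λ_i ). In particular this double integral is bounded by a decaying exponential in each λ_i as λ_i → ∞. -/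
/-!
With `A = U D V†` the exponent is `Tr (T⁻¹ (A R⁻¹ A†))`. Since `T⁻¹ - t_min` and `R⁻¹ - r_min` are
positive semidefinite and the trace of a product of positive semidefinite matrices is nonnegative,
`Tr (T⁻¹ A R⁻¹ A†) ≥ t_min Tr (R⁻¹ A† A) ≥ t_min r_min Tr (A† A) = t_min r_min ∑ λᵢ`, the last
step by unitary invariance of the Frobenius norm. So the integrand lies in
`(0, exp (-t_min r_min ∑ λᵢ)]` for every `U, V`, and integrating twice against a probability
measure keeps it there.
-/

open MeasureTheory Matrix
open scoped ComplexOrder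

noncomputable instance (n : ℕ) : MeasurableSpace (Matrix (Fin n) (Fin n) ℂ) :=
  inferInstanceAs (MeasurableSpace (Fin n → Fin n → ℂ))

instance (n : ℕ) : BorelSpace (Matrix (Fin n) (Fin n) ℂ) :=
  inferInstanceAs (BorelSpace (Fin n → Fin n → ℂ))

instance (n : ℕ) : SecondCountableTopology (Matrix (Fin n) (Fin n) ℂ) :=
  inferInstanceAs (SecondCountableTopology (Fin n → Fin n → ℂ))

instance (n : ℕ) : SecondCountableTopology (unitaryGroup (Fin n) ℂ) :=
  TopologicalSpace.secondCountableTopology_induced _ _ Subtype.val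

namespace Matrix

variable {n 𝕜 : Type*} [Fintype n] [DecidableEq n] [RCLike 𝕜]

theorem PosSemidef.re_trace_mul_nonneg {B C : Matrix n n 𝕜} (hB : B.PosSemidef)
    (hC : C.PosSemidef) : 0 ≤ RCLike.re (B * C).trace := by
  open scoped MatrixOrder in
  obtain ⟨X, rfl⟩ := CStarAlgebra.nonneg_iff_eq_star_mul_self.mp hB.nonneg
  rw [star_eq_conjTranspose, Matrix.mul_assoc, trace_mul_comm, Matrix.mul_assoc,
    ← Matrix.mul_assoc]
  exact (RCLike.nonneg_iff.mp (hC.mul_mul_conjTranspose_same X).trace_nonneg).1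

theorem IsHermitian.posSemidef_sub_smul_one {B : Matrix n n 𝕜} (hB : B.IsHermitian) {c : ℝ}
    (hc : ∀ i, c ≤ hB.eigenvalues i) : (B - (c : 𝕜) • 1).PosSemidef := by
  open scoped MatrixOrder in
  rw [← Matrix.le_iff]
  have hspec : ∀ x ∈ spectrum ℝ B, c ≤ x := by
    rw [hB.spectrum_real_eq_range_eigenvalues]
    rintro _ ⟨i, rfl⟩
    exact hc i
  simpa [Algebra.algebraMap_eq_smul_one] using
    (algebraMap_le_iff_le_spectrum (a := B) hB.isSelfAdjoint).mpr hspec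

theorem IsHermitian.mul_re_trace_le_re_trace_mul {B C : Matrix n n 𝕜} (hB : B.IsHermitian)
    {c : ℝ} (hc : ∀ i, c ≤ hB.eigenvalues i) (hC : C.PosSemidef) :
    c * RCLike.re C.trace ≤ RCLike.re (B * C).trace := by
  have h := (hB.posSemidef_sub_smul_one hc).re_trace_mul_nonneg hC
  rw [Matrix.sub_mul, trace_sub, smul_mul, Matrix.one_mul, trace_smul, map_sub, smul_eq_mul,
    RCLike.re_ofReal_mul] at h
  linarith

theorem conjTranspose_mul_self_unitary_mul {U : Matrix n n 𝕜} (hU : U ∈ unitaryGroup n 𝕜)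
    (A : Matrix n n 𝕜) : (U * A)ᴴ * (U * A) = Aᴴ * A := by
  rw [conjTranspose_mul, Matrix.mul_assoc, ← Matrix.mul_assoc Uᴴ, ← star_eq_conjTranspose U,
    Unitary.star_mul_self_of_mem hU, Matrix.one_mul]

theorem trace_conjTranspose_mul_self_mul_unitary {V : Matrix n n 𝕜} (hV : V ∈ unitaryGroup n 𝕜)
    (A : Matrix n n 𝕜) : ((A * V)ᴴ * (A * V)).trace = (Aᴴ * A).trace := by
  rw [conjTranspose_mul, Matrix.mul_assoc, trace_mul_comm, Matrix.mul_assoc, Matrix.mul_assoc,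
    ← star_eq_conjTranspose V, Unitary.mul_star_self_of_mem hV, Matrix.mul_one]

theorem re_trace_conjTranspose_mul_self_diagonal_unitary {U V : Matrix n n 𝕜}
    (hU : U ∈ unitaryGroup n 𝕜) (hV : V ∈ unitaryGroup n 𝕜) (d : n → ℝ) :
    RCLike.re ((U * diagonal (fun i => (d i : 𝕜)) * Vᴴ)ᴴ *
      (U * diagonal (fun i => (d i : 𝕜)) * Vᴴ)).trace = ∑ i, d i ^ 2 := by
  rw [trace_conjTranspose_mul_self_mul_unitary (V := Vᴴ) (Unitary.star_mem hV),
    conjTranspose_mul_self_unitary_mul hU, diagonal_conjTranspose, diagonal_mul_diagonal,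
    trace_diagonal, map_sum]
  simp [sq]

theorem mul_mul_sum_sq_le_re_trace_mul_unitary_sandwich {P Q : Matrix n n 𝕜} (hP : P.IsHermitian)
    (hQ : Q.PosSemidef) {p q : ℝ} (hp : 0 ≤ p) (hpP : ∀ i, p ≤ hP.eigenvalues i)
    (hqQ : ∀ i, q ≤ hQ.1.eigenvalues i) {U V : Matrix n n 𝕜} (hU : U ∈ unitaryGroup n 𝕜)
    (hV : V ∈ unitaryGroup n 𝕜) (d : n → ℝ) :
    p * q * ∑ i, d i ^ 2 ≤ RCLike.re (P * U * diagonal (fun i => (d i : 𝕜)) * Vᴴ * Q * V *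
      (diagonal fun i => (d i : 𝕜))ᴴ * Uᴴ).trace := by
  set A := U * diagonal (fun i => (d i : 𝕜)) * Vᴴ
  have hsandwich : P * U * diagonal (fun i => (d i : 𝕜)) * Vᴴ * Q * V *
      (diagonal fun i => (d i : 𝕜))ᴴ * Uᴴ = P * (A * Q * Aᴴ) := by
    simp only [A, conjTranspose_mul, conjTranspose_conjTranspose, Matrix.mul_assoc]
  calc p * q * ∑ i, d i ^ 2 = p * (q * RCLike.re (Aᴴ * A).trace) := by
        rw [re_trace_conjTranspose_mul_self_diagonal_unitary hU hV, mul_assoc]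
    _ ≤ p * RCLike.re (Q * (Aᴴ * A)).trace :=
        mul_le_mul_of_nonneg_left
          (hQ.1.mul_re_trace_le_re_trace_mul hqQ (posSemidef_conjTranspose_mul_self A)) hp
    _ = p * RCLike.re (A * Q * Aᴴ).trace := by
        rw [← Matrix.mul_assoc, trace_mul_cycle]
    _ ≤ RCLike.re (P * (A * Q * Aᴴ)).trace :=
        hP.mul_re_trace_le_re_trace_mul hpP (hQ.mul_mul_conjTranspose_same A)
    _ = _ := by rw [hsandwich]

end Matrix

section ProbabilityIntegral

variable {X Y : Type*} [MeasurableSpace X] [MeasurableSpace Y] {μ : Measure X} {ν : Measure Y}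
  [IsProbabilityMeasure μ] [IsProbabilityMeasure ν] {C : ℝ}

theorem integral_mem_Ioc_of_forall_mem_Ioc {f : X → ℝ} (hf : AEStronglyMeasurable f μ)
    (hfC : ∀ x, f x ∈ Set.Ioc 0 C) : ∫ x, f x ∂μ ∈ Set.Ioc 0 C := by
  have hint : Integrable f μ := .of_bound hf C (ae_of_all _ fun x => by
    rw [Real.norm_of_nonneg (hfC x).1.le]; exact (hfC x).2)
  refine ⟨?_, ?_⟩
  · rw [integral_pos_iff_support_of_nonneg (fun x => (hfC x).1.le) hint,
      Function.support_eq_univ fun x => (hfC x).1.ne']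
    simp
  · simpa using integral_mono hint (integrable_const C) fun x => (hfC x).2

theorem integral_integral_mem_Ioc_of_forall_mem_Ioc {F : X → Y → ℝ}
    (hF : StronglyMeasurable (Function.uncurry F)) (hFC : ∀ x y, F x y ∈ Set.Ioc 0 C) :
    ∫ x, ∫ y, F x y ∂ν ∂μ ∈ Set.Ioc 0 C :=
  integral_mem_Ioc_of_forall_mem_Ioc hF.integral_prod_right'.aestronglyMeasurable fun x =>
    integral_mem_Ioc_of_forall_mem_Ioc
      (hF.comp_measurable measurable_prodMk_left).aestronglyMeasurable (hFC x)

end ProbabilityIntegral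

theorem double_unitary_integral_exponential_bound_general (M : ℕ) (hM : 1 ≤ M)
    (T R : Matrix (Fin M) (Fin M) ℂ) (hT : T.PosDef) (hR : R.PosDef)
    (lam : Fin M → ℝ) (hlam : ∀ i, 0 ≤ lam i)
    (ν : Measure (Matrix.unitaryGroup (Fin M) ℂ)) [IsProbabilityMeasure ν] :
    0 < (∫ U : Matrix.unitaryGroup (Fin M) ℂ, ∫ V : Matrix.unitaryGroup (Fin M) ℂ,
        Real.exp (-(Matrix.trace (T⁻¹ * (U : Matrix (Fin M) (Fin M) ℂ) *
          Matrix.diagonal (fun i => (Real.sqrt (lam i) : ℂ)) *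
          (V : Matrix (Fin M) (Fin M) ℂ)ᴴ * R⁻¹ * (V : Matrix (Fin M) (Fin M) ℂ) *
          (Matrix.diagonal (fun i => (Real.sqrt (lam i) : ℂ)))ᴴ *
          (U : Matrix (Fin M) (Fin M) ℂ)ᴴ)).re) ∂ν ∂ν) ∧
      (∫ U : Matrix.unitaryGroup (Fin M) ℂ, ∫ V : Matrix.unitaryGroup (Fin M) ℂ,
        Real.exp (-(Matrix.trace (T⁻¹ * (U : Matrix (Fin M) (Fin M) ℂ) *
          Matrix.diagonal (fun i => (Real.sqrt (lam i) : ℂ)) *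
          (V : Matrix (Fin M) (Fin M) ℂ)ᴴ * R⁻¹ * (V : Matrix (Fin M) (Fin M) ℂ) *
          (Matrix.diagonal (fun i => (Real.sqrt (lam i) : ℂ)))ᴴ *
          (U : Matrix (Fin M) (Fin M) ℂ)ᴴ)).re) ∂ν ∂ν) ≤
        Real.exp (-(Finset.univ.inf' ⟨⟨0, hM⟩, Finset.mem_univ _⟩ hT.inv.1.eigenvalues) *
          (Finset.univ.inf' ⟨⟨0, hM⟩, Finset.mem_univ _⟩ hR.inv.1.eigenvalues) *
          ∑ i : Fin M, lam i) := by
  have htmin : 0 ≤ Finset.univ.inf' ⟨⟨0, hM⟩, Finset.mem_univ _⟩ hT.inv.1.eigenvalues :=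
    Finset.le_inf' _ _ fun i _ => (hT.inv.eigenvalues_pos i).le
  refine integral_integral_mem_Ioc_of_forall_mem_Ioc ?_ fun U V => ⟨Real.exp_pos _, ?_⟩
  · exact Continuous.stronglyMeasurable (by fun_prop)
  rw [Real.exp_le_exp, neg_mul, neg_mul, neg_le_neg_iff]
  simpa [Real.sq_sqrt (hlam _)] using
    mul_mul_sum_sq_le_re_trace_mul_unitary_sandwich hT.inv.1 hR.inv.posSemidef htmin
      (fun i => Finset.inf'_le _ (Finset.mem_univ i))
      (fun i => Finset.inf'_le _ (Finset.mem_univ i)) U.2 V.2 fun i => √(lam i)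

/-- Lemma 6: exponential bound on the double unitary integral appearing in the
fully correlated channel problem.  The integrals are with respect to the normalized
Haar (probability) measure on `U(M)`. -/
theorem double_unitary_integral_exponential_bound (M : ℕ) (hM : 1 ≤ M)
    (T R : Matrix (Fin M) (Fin M) ℂ) (hT : T.PosDef) (hR : R.PosDef)
    (lam : Fin M → ℝ) (hlam : ∀ i, 0 ≤ lam i)
    (ν : Measure (Matrix.unitaryGroup (Fin M) ℂ)) [IsProbabilityMeasure ν]
    (hinv : ∀ U : Matrix.unitaryGroup (Fin M) ℂ, ν.map (fun V => U * V) = ν) :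
    0 < (∫ U : Matrix.unitaryGroup (Fin M) ℂ, ∫ V : Matrix.unitaryGroup (Fin M) ℂ,
        Real.exp (-(Matrix.trace (T⁻¹ * (U : Matrix (Fin M) (Fin M) ℂ) *
          Matrix.diagonal (fun i => (Real.sqrt (lam i) : ℂ)) *
          (V : Matrix (Fin M) (Fin M) ℂ)ᴴ * R⁻¹ * (V : Matrix (Fin M) (Fin M) ℂ) *
          (Matrix.diagonal (fun i => (Real.sqrt (lam i) : ℂ)))ᴴ *
          (U : Matrix (Fin M) (Fin M) ℂ)ᴴ)).re) ∂ν ∂ν) ∧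
      (∫ U : Matrix.unitaryGroup (Fin M) ℂ, ∫ V : Matrix.unitaryGroup (Fin M) ℂ,
        Real.exp (-(Matrix.trace (T⁻¹ * (U : Matrix (Fin M) (Fin M) ℂ) *
          Matrix.diagonal (fun i => (Real.sqrt (lam i) : ℂ)) *
          (V : Matrix (Fin M) (Fin M) ℂ)ᴴ * R⁻¹ * (V : Matrix (Fin M) (Fin M) ℂ) *
          (Matrix.diagonal (fun i => (Real.sqrt (lam i) : ℂ)))ᴴ *
          (U : Matrix (Fin M) (Fin M) ℂ)ᴴ)).re) ∂ν ∂ν) ≤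
        Real.exp (-(Finset.univ.inf' ⟨⟨0, hM⟩, Finset.mem_univ _⟩ hT.inv.1.eigenvalues) *
          (Finset.univ.inf' ⟨⟨0, hM⟩, Finset.mem_univ _⟩ hR.inv.1.eigenvalues) *
          ∑ i : Fin M, lam i) :=
  double_unitary_integral_exponential_bound_general M hM T R hT hR lam hlam ν
end
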